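/- arXiv:1905.03215 — 3 statements merged into one kernel-verified Lean document; each statement's English description precedes it below -/
import Mathlib

section
/- Let c : ℤ[i] → ℂ be finitely supported and supported on primitive Gaussian integers z = u + iv with gcd(u,v) = 1 and v ≠ 0. Then for every integer q ≥ 1 the determinant sum decomposes as S_q(c) = Σ_{d | q} S'_{q/d}(c_d), where for each divisor d of q the function c_d : ℤ[i] → ℂ is defined by c_d(u + iw) = c(u + idw). -/
/-!
Write `v₁ = d w₁`, `v₂ = d w₂`, `q = d m`. Since `gcd(uᵢ, vᵢ) = 1`, a prime dividing `m` and one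
of `w₁, w₂` divides the other as soon as `m ∣ u₁w₂ - u₂w₁`; hence `gcd(w₁w₂, m) = 1` is equivalent
to `gcd(w₁, w₂, m) = 1`, i.e. to `d = gcd(v₁, v₂, q)`. So each pair `(z₁, z₂)` counted by `S_q(c)`
is counted by exactly one of the reduced sums `S'_{q/d}(c_d)`, after the substitution `v = d w`.
-/

open scoped ComplexConjugate
open scoped Classical

noncomputable section

/-- `z = u+iv` is *odd primitive*: `u ≢ v (mod 2)`, `gcd(u,v) = 1`, `uv ≠ 0`. -/
def OddPrimitive (z : GaussianInt) : Prop :=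
  ¬ z.re ≡ z.im [ZMOD 2] ∧ Int.gcd z.re z.im = 1 ∧ z.re * z.im ≠ 0

/-- The determinant sum `S_q = ∑_{u₁v₂ ≡ u₂v₁ (mod q)} c(z₁) conj (c(z₂))`. -/
def detSum (c : GaussianInt → ℂ) (q : ℕ) : ℂ :=
  ∑ᶠ z₁ : GaussianInt, ∑ᶠ z₂ : GaussianInt,
    if (q : ℤ) ∣ (z₁.re * z₂.im - z₂.re * z₁.im) then c z₁ * conj (c z₂) else 0

/-- The reduced determinant sum `S'_q`, with the extra condition `gcd(v₁v₂, q) = 1`. -/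
def detSum' (c : GaussianInt → ℂ) (q : ℕ) : ℂ :=
  ∑ᶠ z₁ : GaussianInt, ∑ᶠ z₂ : GaussianInt,
    if (q : ℤ) ∣ (z₁.re * z₂.im - z₂.re * z₁.im) ∧ Int.gcd (z₁.im * z₂.im) q = 1
    then c z₁ * conj (c z₂) else 0

/-- `S(Q,X) = ∑_{1 ≤ q ≤ Q} S_q` (the dependence on `X` is through the support of `c`). -/
def SQX (c : GaussianInt → ℂ) (Q : ℝ) : ℂ :=
  ∑ q ∈ Finset.Icc 1 ⌊Q⌋₊, detSum c q

/-- `c` is supported on odd primitive Gaussian integers `z` with `1 < |z|² ≤ X`. -/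
def SuppOK (c : GaussianInt → ℂ) (X : ℝ) : Prop :=
  ∀ z : GaussianInt, c z ≠ 0 →
    OddPrimitive z ∧ 1 < (Zsqrtd.norm z : ℝ) ∧ (Zsqrtd.norm z : ℝ) ≤ X

/-- The Siegel–Walfisz condition with exponent `B` and constant `K`. -/
def SWCond (c : GaussianInt → ℂ) (X B K : ℝ) : Prop :=
  ∀ (k ℓ : ℕ), 1 ≤ ℓ → ∀ (α : GaussianInt) (t : ℝ),
    ‖(∑ᶠ z : GaussianInt,
        if z ≠ 0 ∧ (ℓ : GaussianInt) ∣ (z - α) then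
          c z * (conj (GaussianInt.toComplex z) / GaussianInt.toComplex z) ^ k *
            ((‖GaussianInt.toComplex z‖ : ℝ) : ℂ) ^ ((t : ℂ) * Complex.I)
        else 0)‖
      ≤ K * (ℓ : ℝ) ^ 2 * ((k : ℝ) ^ 2 + 1) * (t ^ 2 + 1) * X * Real.log X ^ (-B)

/-- The dilated coefficients `c_d(u + iw) = c(u + i d w)`. -/
def cdil (d : ℕ) (c : GaussianInt → ℂ) : GaussianInt → ℂ :=
  fun z => c ⟨z.re, (d : ℤ) * z.im⟩

theorem finsum_finsum_eq_sum_sum {α β M : Type*} [AddCommMonoid M] (f : α → β → M)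
    (s : Finset α) (t : Finset β) (h : ∀ a b, f a b ≠ 0 → a ∈ s ∧ b ∈ t) :
    ∑ᶠ a, ∑ᶠ b, f a b = ∑ a ∈ s, ∑ b ∈ t, f a b := by
  rw [finsum_congr fun a => finsum_eq_sum_of_support_subset (f a) fun b hb => (h a b hb).2]
  refine finsum_eq_sum_of_support_subset _ fun a ha => ?_
  obtain ⟨b, -, hb⟩ := Finset.exists_ne_zero_of_sum_ne_zero ha
  exact (h a b hb).1

namespace Int

theorem isCoprime_of_dvd_mul_sub_mul {u₁ u₂ w₁ w₂ m : ℤ} (hu : IsCoprime u₁ w₁)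
    (hm : m ∣ u₁ * w₂ - u₂ * w₁) (hg : IsCoprime (gcd w₁ w₂ : ℤ) m) : IsCoprime w₁ m := by
  rw [isCoprime_iff_gcd_eq_one] at hg ⊢
  have hw₁ : (gcd w₁ m : ℤ) ∣ w₁ := gcd_dvd_left _ _
  have hm' : (gcd w₁ m : ℤ) ∣ m := gcd_dvd_right _ _
  have hw₂ : (gcd w₁ m : ℤ) ∣ w₂ := by
    refine (hu.symm.of_isCoprime_of_dvd_left hw₁).dvd_of_dvd_mul_left ?_
    simpa using dvd_add (hm'.trans hm) (hw₁.mul_left u₂)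
  have hdvd : gcd w₁ m ∣ gcd (gcd w₁ w₂ : ℤ) m :=
    dvd_gcd (natCast_dvd_natCast.mpr (dvd_gcd hw₁ hw₂)) hm'
  rw [hg] at hdvd
  exact Nat.dvd_one.mp hdvd

theorem isCoprime_mul_iff_of_dvd_mul_sub_mul {u₁ u₂ w₁ w₂ m : ℤ} (hu₁ : IsCoprime u₁ w₁)
    (hu₂ : IsCoprime u₂ w₂) (hm : m ∣ u₁ * w₂ - u₂ * w₁) :
    IsCoprime (w₁ * w₂) m ↔ IsCoprime (gcd w₁ w₂ : ℤ) m := by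
  refine ⟨fun h => h.of_isCoprime_of_dvd_left ((gcd_dvd_left _ _).mul_right _), fun h => ?_⟩
  have hm' : m ∣ u₂ * w₁ - u₁ * w₂ := by simpa using hm.neg_right
  exact (isCoprime_of_dvd_mul_sub_mul hu₁ hm h).mul_left
    (isCoprime_of_dvd_mul_sub_mul hu₂ hm' (by rwa [gcd_comm]))

end Int

theorem reduced_det_conditions_iff {u₁ v₁ u₂ v₂ : ℤ} (h₁ : IsCoprime u₁ v₁) (h₂ : IsCoprime u₂ v₂)
    {q d : ℕ} (hq : q ≠ 0) (hdq : d ∣ q) :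
    ((d : ℤ) ∣ v₁ ∧ (d : ℤ) ∣ v₂ ∧
        (((q / d : ℕ) : ℤ) ∣ u₁ * (v₂ / d) - u₂ * (v₁ / d) ∧
          Int.gcd (v₁ / d * (v₂ / d)) (q / d : ℕ) = 1)) ↔
      (q : ℤ) ∣ u₁ * v₂ - u₂ * v₁ ∧ d = Nat.gcd (Int.gcd v₁ v₂) q := by
  obtain ⟨m, rfl⟩ := hdq
  have hd : d ≠ 0 := left_ne_zero_of_mul hq
  by_cases hv : (d : ℤ) ∣ v₁ ∧ (d : ℤ) ∣ v₂
  swap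
  · refine iff_of_false (fun h => hv ⟨h.1, h.2.1⟩) fun ⟨_, hgcd⟩ => hv ?_
    have hdg : (d : ℤ) ∣ (Int.gcd v₁ v₂ : ℤ) := by
      rw [hgcd]; exact Int.natCast_dvd_natCast.mpr (Nat.gcd_dvd_left _ _)
    exact ⟨hdg.trans (Int.gcd_dvd_left _ _), hdg.trans (Int.gcd_dvd_right _ _)⟩
  obtain ⟨⟨w₁, rfl⟩, ⟨w₂, rfl⟩⟩ := hv
  have hd' : (d : ℤ) ≠ 0 := by exact_mod_cast hd
  have hdet : u₁ * (d * w₂) - u₂ * (d * w₁) = d * (u₁ * w₂ - u₂ * w₁) := by ring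
  simp only [dvd_mul_right, true_and, Int.mul_ediv_cancel_left _ hd',
    Nat.mul_div_cancel_left _ (Nat.pos_of_ne_zero hd), hdet, Nat.cast_mul,
    mul_dvd_mul_iff_left hd', Int.gcd_mul_left, Int.natAbs_natCast, Nat.gcd_mul_left,
    left_eq_mul₀ hd]
  refine and_congr_right fun hm => ?_
  rw [← Int.isCoprime_iff_gcd_eq_one, ← Int.gcd_natCast_natCast, ← Int.isCoprime_iff_gcd_eq_one]
  exact Int.isCoprime_mul_iff_of_dvd_mul_sub_mul h₁.of_mul_right_right h₂.of_mul_right_right hm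

theorem ite_dvd_mul_sub_mul_eq_sum_divisors {M : Type*} [AddCommMonoid M] {u₁ v₁ u₂ v₂ : ℤ}
    (h₁ : IsCoprime u₁ v₁) (h₂ : IsCoprime u₂ v₂) {q : ℕ} (hq : q ≠ 0) (x : M) :
    (if (q : ℤ) ∣ u₁ * v₂ - u₂ * v₁ then x else 0) =
      ∑ d ∈ q.divisors,
        if (d : ℤ) ∣ v₁ ∧ (d : ℤ) ∣ v₂ ∧
            (((q / d : ℕ) : ℤ) ∣ u₁ * (v₂ / d) - u₂ * (v₁ / d) ∧
              Int.gcd (v₁ / d * (v₂ / d)) (q / d : ℕ) = 1)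
        then x else 0 := by
  rw [Finset.sum_congr rfl fun d hd =>
    if_congr (reduced_det_conditions_iff h₁ h₂ hq (Nat.dvd_of_mem_divisors hd)) rfl rfl]
  by_cases hdvd : (q : ℤ) ∣ u₁ * v₂ - u₂ * v₁
  · simp [hdvd, Finset.sum_ite_eq', hq, Nat.gcd_dvd_right]
  · simp [hdvd]

namespace GaussianInt

def dilateIm (d : ℤ) (z : GaussianInt) : GaussianInt := ⟨z.re, d * z.im⟩

theorem dilateIm_injective {d : ℤ} (hd : d ≠ 0) : Function.Injective (dilateIm d) := by
  intro a b h
  simp only [dilateIm, Zsqrtd.mk.injEq] at h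
  exact Zsqrtd.ext h.1 (mul_left_cancel₀ hd h.2)

theorem mem_range_dilateIm {d : ℤ} {z : GaussianInt} : z ∈ Set.range (dilateIm d) ↔ d ∣ z.im :=
  ⟨fun ⟨w, hw⟩ => hw ▸ dvd_mul_right d w.im, fun ⟨k, hk⟩ => ⟨⟨z.re, k⟩, Zsqrtd.ext rfl hk.symm⟩⟩

end GaussianInt

open GaussianInt

theorem ne_zero_and_ne_zero_of_ite_mul_conj {P : Prop} [Decidable P] {a b : ℂ}
    (h : (if P then a * conj b else 0) ≠ 0) : a ≠ 0 ∧ b ≠ 0 := by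
  split_ifs at h
  · simpa using h
  · exact absurd rfl h

theorem detSum_eq_sum (c : GaussianInt → ℂ) (hfin : (Function.support c).Finite) (q : ℕ) :
    detSum c q = ∑ z₁ ∈ hfin.toFinset, ∑ z₂ ∈ hfin.toFinset,
      if (q : ℤ) ∣ z₁.re * z₂.im - z₂.re * z₁.im then c z₁ * conj (c z₂) else 0 :=
  finsum_finsum_eq_sum_sum _ _ _ fun _ _ h => by
    simpa using ne_zero_and_ne_zero_of_ite_mul_conj h

theorem detSum'_cdil_eq_sum (c : GaussianInt → ℂ) (hfin : (Function.support c).Finite) {d : ℕ}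
    (hd : d ≠ 0) (m : ℕ) :
    detSum' (cdil d c) m = ∑ z₁ ∈ hfin.toFinset, ∑ z₂ ∈ hfin.toFinset,
      if (d : ℤ) ∣ z₁.im ∧ (d : ℤ) ∣ z₂.im ∧
          ((m : ℤ) ∣ z₁.re * (z₂.im / d) - z₂.re * (z₁.im / d) ∧
            Int.gcd (z₁.im / d * (z₂.im / d)) m = 1)
      then c z₁ * conj (c z₂) else 0 := by
  set S := hfin.toFinset
  set G : GaussianInt → GaussianInt → ℂ := fun z₁ z₂ =>
    if (d : ℤ) ∣ z₁.im ∧ (d : ℤ) ∣ z₂.im ∧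
        ((m : ℤ) ∣ z₁.re * (z₂.im / d) - z₂.re * (z₁.im / d) ∧
          Int.gcd (z₁.im / d * (z₂.im / d)) m = 1)
    then c z₁ * conj (c z₂) else 0
  have hd' : (d : ℤ) ≠ 0 := by exact_mod_cast hd
  have hinj : Set.InjOn (dilateIm d) (dilateIm d ⁻¹' S) := (dilateIm_injective hd').injOn
  have hG : ∀ z₁ z₂, G z₁ z₂ ≠ 0 → z₁ ∈ Set.range (dilateIm d) ∧ z₂ ∈ Set.range (dilateIm d) :=
    fun z₁ z₂ h => by
      simp only [G, ne_eq, ite_eq_right_iff, Classical.not_imp] at h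
      exact ⟨mem_range_dilateIm.mpr h.1.1, mem_range_dilateIm.mpr h.1.2.1⟩
  calc detSum' (cdil d c) m
      = ∑ᶠ z₁, ∑ᶠ z₂, G (dilateIm d z₁) (dilateIm d z₂) := by
        simp [detSum', G, cdil, dilateIm, Int.mul_ediv_cancel_left _ hd']
    _ = ∑ z₁ ∈ S.preimage _ hinj, ∑ z₂ ∈ S.preimage _ hinj, G (dilateIm d z₁) (dilateIm d z₂) := by
        refine finsum_finsum_eq_sum_sum _ _ _ fun _ _ h => ?_
        simpa [S] using ne_zero_and_ne_zero_of_ite_mul_conj h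
    _ = ∑ z₁ ∈ S.preimage _ hinj, ∑ z₂ ∈ S, G (dilateIm d z₁) z₂ :=
        Finset.sum_congr rfl fun z₁ _ => Finset.sum_preimage _ _ _ _ fun z₂ _ hz₂ =>
          not_ne_iff.mp fun h => hz₂ (hG _ _ h).2
    _ = ∑ z₁ ∈ S, ∑ z₂ ∈ S, G z₁ z₂ :=
        Finset.sum_preimage _ _ _ (fun z₁ => ∑ z₂ ∈ S, G z₁ z₂) fun z₁ _ hz₁ =>
          Finset.sum_eq_zero fun z₂ _ => not_ne_iff.mp fun h => hz₁ (hG _ _ h).1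

/-- **Decomposition (1.10).** If `c` is finitely supported and supported on primitive
Gaussian integers (`gcd(u,v) = 1`, `v ≠ 0`), then `S_q(c) = ∑_{d | q} S'_{q/d}(c_d)`. -/
theorem detSum_decomposition (c : GaussianInt → ℂ) (hfin : (Function.support c).Finite)
    (hsupp : ∀ z : GaussianInt, c z ≠ 0 → Int.gcd z.re z.im = 1 ∧ z.im ≠ 0)
    (q : ℕ) (hq : 1 ≤ q) :
    detSum c q = ∑ d ∈ q.divisors, detSum' (cdil d c) (q / d) := by
  have hcop : ∀ z ∈ hfin.toFinset, IsCoprime z.re z.im := fun z hz =>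
    Int.isCoprime_iff_gcd_eq_one.mpr (hsupp z (by simpa using hz)).1
  have hrhs (d : ℕ) (hd : d ∈ q.divisors) :=
    detSum'_cdil_eq_sum c hfin (Nat.pos_of_mem_divisors hd).ne' (q / d)
  rw [detSum_eq_sum c hfin, Finset.sum_congr rfl hrhs, Finset.sum_comm (s := q.divisors)]
  refine Finset.sum_congr rfl fun z₁ hz₁ => ?_
  rw [Finset.sum_comm (s := q.divisors)]
  exact Finset.sum_congr rfl fun z₂ hz₂ =>
    ite_dvd_mul_sub_mul_eq_sum_divisors (hcop z₁ hz₁) (hcop z₂ hz₂) (by omega) _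
end
end

section
/- There is an absolute constant C such that for every integer q ≥ 1 and all reals U ≥ 1, Y ≥ 1, the number of quadruples (u₁, w₁, u₂, w₂) of integers satisfying 1 ≤ u₁, u₂ ≤ U, 1 ≤ w₁, w₂ ≤ Y, gcd(u₁, w₁) = gcd(u₂, w₂) = 1, and u₁w₂ ≡ u₂w₁ (mod q), is at most C·(1 + (U·Y/q)·(log(2UY))³)·U·Y. -/
/-!
Sort the quadruples by `d = u₁w₂ - u₂w₁`, a multiple of `q` with `|d| ≤ N := ⌊U⌋⌊Y⌋`. The
fractions `u₁/w₁`, `u₂/w₂` being reduced, the fibre `d = 0` is the diagonal, of size at most `N`.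
For each of the at most `2N/q` nonzero `d`, the fibre injects into the solutions of `AB - CE = d`
with `A, C ≤ U` and `B, E ≤ Y`. If `r(n)` counts the representations `n = AB`, there are
`∑ r(n) r(n - d) ≤ ∑ r(n)²` of these, i.e. at most as many as solutions of `AB = CE`. Every
solution of `AB = CE` has the form `(gk, lm, gl, km)` with `gklm = AB ≤ N`, and there are at most
`∑_{g,k,l ≤ N} N/(gkl) ≤ N (1 + log N)³` such `(g, k, l, m)`.
-/

open scoped Classical

/-- The finset of quadruples `(u₁, w₁, u₂, w₂)` with `1 ≤ u₁, u₂ ≤ U`, `1 ≤ w₁, w₂ ≤ Y`,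
`gcd(u₁,w₁) = gcd(u₂,w₂) = 1` and `u₁w₂ ≡ u₂w₁ (mod q)`. -/
noncomputable def quadruples (q : ℕ) (U Y : ℝ) : Finset (ℤ × ℤ × ℤ × ℤ) :=
  (Finset.Icc (1 : ℤ) ⌊U⌋ ×ˢ Finset.Icc (1 : ℤ) ⌊Y⌋ ×ˢ
      Finset.Icc (1 : ℤ) ⌊U⌋ ×ˢ Finset.Icc (1 : ℤ) ⌊Y⌋).filter
    fun x : ℤ × ℤ × ℤ × ℤ =>
      Int.gcd x.1 x.2.1 = 1 ∧ Int.gcd x.2.2.1 x.2.2.2 = 1 ∧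
        (q : ℤ) ∣ x.1 * x.2.2.2 - x.2.2.1 * x.2.1

open Finset

theorem Finset.sum_mul_apply_sub_le_sum_sq {G : Type*} [AddGroup G] (t : Finset G) (r : G → ℕ)
    (hr : ∀ n, r n ≠ 0 → n ∈ t) (d : G) :
    ∑ n ∈ t, r n * r (n - d) ≤ ∑ n ∈ t, r n ^ 2 := by
  have hshift : ∑ n ∈ t, r (n - d) ^ 2 ≤ ∑ n ∈ t, r n ^ 2 :=
    calc ∑ n ∈ t, r (n - d) ^ 2 = ∑ n ∈ t.map (Equiv.subRight d).toEmbedding, r n ^ 2 := by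
          rw [sum_map]; rfl
      _ ≤ ∑ n ∈ t, r n ^ 2 := sum_le_sum_of_ne_zero fun n _ hn => hr n (by simpa using hn)
  have hamgm : 2 * ∑ n ∈ t, r n * r (n - d) ≤ ∑ n ∈ t, r n ^ 2 + ∑ n ∈ t, r (n - d) ^ 2 := by
    rw [mul_sum, ← sum_add_distrib]
    exact sum_le_sum fun n _ => by simpa [mul_assoc] using two_mul_le_add_sq (r n) (r (n - d))
  omega

theorem Finset.card_filter_sub_eq_eq_sum {α G : Type*} [AddCommGroup G] [DecidableEq G]
    (s : Finset α) (φ : α → G) (d : G) :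
    #{z ∈ s ×ˢ s | φ z.1 - φ z.2 = d} =
      ∑ n ∈ s.image φ, #{x ∈ s | φ x = n} * #{x ∈ s | φ x = n - d} := by
  rw [card_eq_sum_card_fiberwise (f := fun z => φ z.1) (t := s.image φ)
    fun z hz => mem_image_of_mem φ (mem_product.1 (mem_filter.1 hz).1).1]
  refine sum_congr rfl fun n _ => ?_
  rw [filter_filter, ← card_product, ← filter_product]
  congr 1
  refine filter_congr fun z _ => ⟨fun ⟨hd, hn⟩ => ⟨hn, ?_⟩, fun ⟨hn, hd⟩ => ⟨?_, hn⟩⟩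
  · rw [← hn, ← hd, sub_sub_cancel]
  · rw [hn, hd, sub_sub_cancel]

theorem Finset.card_filter_sub_eq_le_card_filter_eq {α G : Type*} [AddCommGroup G]
    [DecidableEq G] (s : Finset α) (φ : α → G) (d : G) :
    #{z ∈ s ×ˢ s | φ z.1 - φ z.2 = d} ≤ #{z ∈ s ×ˢ s | φ z.1 = φ z.2} := by
  have hdiag := card_filter_sub_eq_eq_sum s φ 0
  simp only [sub_zero, sub_eq_zero, ← sq] at hdiag
  rw [hdiag, card_filter_sub_eq_eq_sum]
  refine sum_mul_apply_sub_le_sum_sq _ _ (fun n hn => ?_) d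
  obtain ⟨x, hx⟩ := card_ne_zero.1 hn
  exact mem_image.2 ⟨x, (mem_filter.1 hx).1, (mem_filter.1 hx).2⟩

theorem exists_mul_factorization_of_mul_eq_mul {M : Type*} [CommMonoidWithZero M]
    [IsCancelMulZero M] [DecompositionMonoid M] {a b c e : M} (hc : c ≠ 0) (h : a * b = c * e) :
    ∃ g k l m, a = g * k ∧ b = l * m ∧ c = g * l ∧ e = k * m := by
  obtain ⟨g, l, ⟨k, rfl⟩, ⟨m, rfl⟩, rfl⟩ := exists_dvd_and_dvd_of_dvd_mul (Dvd.intro e h.symm)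
  refine ⟨g, k, l, m, rfl, rfl, rfl, mul_left_cancel₀ hc ?_⟩
  rw [← h, mul_mul_mul_comm]

theorem Nat.card_filter_mul_le (N : ℕ) {c : ℕ} (hc : 0 < c) :
    #{m ∈ Icc 1 N | c * m ≤ N} = N / c := by
  have : {m ∈ Icc 1 N | c * m ≤ N} = Icc 1 (N / c) := by
    ext m
    simp only [mem_filter, mem_Icc, Nat.le_div_iff_mul_le hc, mul_comm c]
    constructor
    · rintro ⟨⟨h1, _⟩, h⟩; exact ⟨h1, h⟩
    · rintro ⟨h1, h⟩; exact ⟨⟨h1, le_trans (Nat.le_mul_of_pos_right m hc) h⟩, h⟩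
  rw [this, Nat.card_Icc, Nat.add_sub_cancel]

def prodLeTuples (N : ℕ) : Finset ((ℕ × ℕ × ℕ) × ℕ) :=
  {x ∈ (Icc 1 N ×ˢ Icc 1 N ×ˢ Icc 1 N) ×ˢ Icc 1 N | x.1.1 * x.1.2.1 * x.1.2.2 * x.2 ≤ N}

theorem card_prodLeTuples_le (N : ℕ) :
    (#(prodLeTuples N) : ℝ) ≤ N * (1 + Real.log N) ^ 3 := by
  set I := Icc 1 N
  have hfib : #(prodLeTuples N) = ∑ w ∈ I ×ˢ I ×ˢ I, N / (w.1 * w.2.1 * w.2.2) := by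
    rw [prodLeTuples, card_filter, sum_product]
    refine sum_congr rfl fun w hw => ?_
    obtain ⟨⟨hg, -⟩, ⟨hk, -⟩, hl, -⟩ := by simpa only [mem_product, I, mem_Icc] using hw
    rw [← card_filter]
    exact Nat.card_filter_mul_le N (Nat.mul_pos (Nat.mul_pos hg hk) hl)
  have hharm : ∑ g ∈ I, (g : ℝ)⁻¹ ≤ 1 + Real.log N := by
    simpa [harmonic_eq_sum_Icc] using harmonic_le_one_add_log N
  calc (#(prodLeTuples N) : ℝ) = ∑ w ∈ I ×ˢ I ×ˢ I, ((N / (w.1 * w.2.1 * w.2.2) : ℕ) : ℝ) := by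
        rw [hfib, Nat.cast_sum]
    _ ≤ ∑ w ∈ I ×ˢ I ×ˢ I, (N : ℝ) * ((w.1 : ℝ)⁻¹ * ((w.2.1 : ℝ)⁻¹ * (w.2.2 : ℝ)⁻¹)) := by
        refine sum_le_sum fun w _ => Nat.cast_div_le.trans_eq ?_
        push_cast
        field_simp
    _ = N * (∑ g ∈ I, (g : ℝ)⁻¹) ^ 3 := by
        simp only [← mul_sum, sum_product, ← sum_mul]
        ring
    _ ≤ N * (1 + Real.log N) ^ 3 := by gcongr

theorem mem_prodLeTuples {N g k l m : ℕ} (hpos : 0 < g * k * l * m) (hle : g * k * l * m ≤ N) :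
    ((g, k, l), m) ∈ prodLeTuples N := by
  have hfac := fun x (hx : x ∣ g * k * l * m) => (Nat.le_of_dvd hpos hx).trans hle
  have := hfac g ⟨k * l * m, by ring⟩
  have := hfac k ⟨g * l * m, by ring⟩
  have := hfac l ⟨g * k * m, by ring⟩
  have := hfac m ⟨g * k * l, by ring⟩
  simp only [CanonicallyOrderedAdd.mul_pos] at hpos
  simp only [prodLeTuples, mem_filter, mem_product, mem_Icc]
  omega

noncomputable def intRect (a b : ℕ) : Finset (ℤ × ℤ) := Icc 1 (a : ℤ) ×ˢ Icc 1 (b : ℤ)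

theorem card_intRect (a b : ℕ) : #(intRect a b) = a * b := by
  simp [intRect]

theorem card_filter_mul_eq_mul_le (a b : ℕ) :
    #{z ∈ intRect a b ×ˢ intRect a b | z.1.1 * z.1.2 = z.2.1 * z.2.2} ≤
      #(prodLeTuples (a * b)) := by
  refine card_le_card_of_surjOn (s := prodLeTuples (a * b)) (fun x =>
    ((((x.1.1 * x.1.2.1 : ℕ) : ℤ), ((x.1.2.2 * x.2 : ℕ) : ℤ)),
      (((x.1.1 * x.1.2.2 : ℕ) : ℤ), ((x.1.2.1 * x.2 : ℕ) : ℤ)))) ?_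
  rintro ⟨⟨A, B⟩, ⟨C, E⟩⟩ hz
  simp only [coe_filter, intRect, mem_product, mem_Icc, Set.mem_ofPred_eq] at hz
  obtain ⟨⟨⟨⟨hA, hAa⟩, hB, hBb⟩, ⟨hC, -⟩, hE, -⟩, h⟩ := hz
  lift A to ℕ using by omega
  lift B to ℕ using by omega
  lift C to ℕ using by omega
  lift E to ℕ using by omega
  norm_cast at hA hAa hB hBb hC hE h
  obtain ⟨g, k, l, m, rfl, rfl, rfl, rfl⟩ :=
    exists_mul_factorization_of_mul_eq_mul (by omega : C ≠ 0) h
  have hprod : g * k * l * m = g * k * (l * m) := by ring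
  refine ⟨((g, k, l), m), mem_prodLeTuples ?_ ?_, rfl⟩
  · rw [hprod]; exact Nat.mul_pos hA hB
  · rw [hprod]; exact Nat.mul_le_mul hAa hBb

theorem Int.eq_and_eq_of_mul_eq_mul_of_gcd_eq_one {u₁ w₁ u₂ w₂ : ℤ} (hw₁ : 0 < w₁) (hw₂ : 0 < w₂)
    (h₁ : Int.gcd u₁ w₁ = 1) (h₂ : Int.gcd u₂ w₂ = 1) (h : u₁ * w₂ = u₂ * w₁) :
    u₁ = u₂ ∧ w₁ = w₂ :=
  Rat.div_int_inj hw₁ hw₂ h₁ h₂ <| by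
    rw [div_eq_div_iff (by positivity) (by positivity)]
    exact_mod_cast h

theorem card_erase_zero_filter_dvd_le (N q : ℕ) :
    #(({d ∈ Icc (-(N : ℤ)) N | (q : ℤ) ∣ d}).erase 0) ≤ 2 * (N / q) := by
  set t : ℤ := (N : ℤ) / q with ht
  have hsub : ({d ∈ Icc (-(N : ℤ)) N | (q : ℤ) ∣ d}).erase 0 ⊆
      ((Icc (-t) t).erase 0).image ((q : ℤ) * ·) := by
    intro d hd
    obtain ⟨hd0, ⟨hlo, hhi⟩, j, rfl⟩ := by simpa only [mem_erase, mem_filter, mem_Icc] using hd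
    have hq : (0 : ℤ) < q := Int.natCast_pos.2 (Nat.pos_of_ne_zero (by rintro rfl; simp at hd0))
    have hj : j ≠ 0 := by rintro rfl; simp at hd0
    refine mem_image.2 ⟨j, mem_erase.2 ⟨hj, mem_Icc.2 ⟨?_, ?_⟩⟩, rfl⟩
    · rw [neg_le, Int.le_ediv_iff_mul_le hq]
      linarith
    · rw [Int.le_ediv_iff_mul_le hq]
      linarith
  calc _ ≤ #(((Icc (-t) t).erase 0).image ((q : ℤ) * ·)) := card_le_card hsub
    _ ≤ #((Icc (-t) t).erase 0) := card_image_le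
    _ = 2 * (N / q) := by
        have : 0 ≤ t := Int.ediv_nonneg (Nat.cast_nonneg N) (Nat.cast_nonneg q)
        rw [card_erase_of_mem (by simpa), Int.card_Icc, ht, ← Int.natCast_div]
        omega

section Quadruples

variable {q : ℕ} {U Y : ℝ} {a b : ℕ}

theorem mem_quadruples (ha : ⌊U⌋ = a) (hb : ⌊Y⌋ = b) {x : ℤ × ℤ × ℤ × ℤ} :
    x ∈ quadruples q U Y ↔
      ((1 ≤ x.1 ∧ x.1 ≤ a) ∧ (1 ≤ x.2.1 ∧ x.2.1 ≤ b) ∧ (1 ≤ x.2.2.1 ∧ x.2.2.1 ≤ a) ∧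
        (1 ≤ x.2.2.2 ∧ x.2.2.2 ≤ b)) ∧
      Int.gcd x.1 x.2.1 = 1 ∧ Int.gcd x.2.2.1 x.2.2.2 = 1 ∧
        (q : ℤ) ∣ x.1 * x.2.2.2 - x.2.2.1 * x.2.1 := by
  simp only [quadruples, ha, hb, mem_filter, mem_product, mem_Icc]

theorem card_filter_quadruples_sub_eq_zero_le (ha : ⌊U⌋ = a) (hb : ⌊Y⌋ = b) :
    #{x ∈ quadruples q U Y | x.1 * x.2.2.2 - x.2.2.1 * x.2.1 = 0} ≤ a * b := by
  rw [← card_intRect a b]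
  refine card_le_card_of_injOn (fun x => (x.1, x.2.1)) (fun x hx => ?_)
    (Set.LeftInvOn.injOn (f₁' := fun p => (p.1, p.2, p.1, p.2)) fun x hx => ?_)
  all_goals
    obtain ⟨hxQ, hδ⟩ := mem_filter.1 hx
    obtain ⟨⟨hu₁, ⟨hw₁, hw₁b⟩, -, hw₂, -⟩, hg₁, hg₂, -⟩ := (mem_quadruples ha hb).1 hxQ
  · simp only [intRect, coe_product, Set.mem_prod, mem_coe, mem_Icc]
    exact ⟨hu₁, hw₁, hw₁b⟩
  · obtain ⟨hu, hw⟩ :=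
      Int.eq_and_eq_of_mul_eq_mul_of_gcd_eq_one hw₁ hw₂ hg₁ hg₂ (sub_eq_zero.1 hδ)
    exact Prod.ext rfl (Prod.ext rfl (Prod.ext hu hw))

theorem card_filter_quadruples_sub_eq_le (ha : ⌊U⌋ = a) (hb : ⌊Y⌋ = b) (d : ℤ) :
    #{x ∈ quadruples q U Y | x.1 * x.2.2.2 - x.2.2.1 * x.2.1 = d} ≤
      #{z ∈ intRect a b ×ˢ intRect a b | z.1.1 * z.1.2 - z.2.1 * z.2.2 = d} := by
  refine card_le_card_of_injOn (fun x => ((x.1, x.2.2.2), (x.2.2.1, x.2.1))) (fun x hx => ?_)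
    (Set.LeftInvOn.injOn (f₁' := fun z => (z.1.1, z.2.2, z.2.1, z.1.2)) fun x _ => rfl)
  obtain ⟨hxQ, hδ⟩ := mem_filter.1 hx
  obtain ⟨⟨hu₁, hw₁, hu₂, hw₂⟩, -⟩ := (mem_quadruples ha hb).1 hxQ
  simp only [intRect, coe_filter, Set.mem_ofPred_eq, mem_product, mem_Icc]
  exact ⟨⟨⟨hu₁, hw₂⟩, hu₂, hw₁⟩, hδ⟩

theorem sub_mem_filter_dvd_of_mem_quadruples (ha : ⌊U⌋ = a) (hb : ⌊Y⌋ = b)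
    {x : ℤ × ℤ × ℤ × ℤ} (hx : x ∈ quadruples q U Y) :
    x.1 * x.2.2.2 - x.2.2.1 * x.2.1 ∈ {d ∈ Icc (-((a * b : ℕ) : ℤ)) (a * b : ℕ) | (q : ℤ) ∣ d} := by
  obtain ⟨⟨hu₁, hw₁, hu₂, hw₂⟩, -, -, hq⟩ := (mem_quadruples ha hb).1 hx
  simp only [mem_filter, mem_Icc]
  refine ⟨⟨?_, ?_⟩, hq⟩ <;> push_cast <;> nlinarith

theorem card_quadruples_le (ha : ⌊U⌋ = a) (hb : ⌊Y⌋ = b) :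
    #(quadruples q U Y) ≤ a * b + 2 * (a * b / q) * #(prodLeTuples (a * b)) := by
  set D := {d ∈ Icc (-((a * b : ℕ) : ℤ)) (a * b : ℕ) | (q : ℤ) ∣ d}
  have h0 : (0 : ℤ) ∈ D := by simp [D]; positivity
  rw [card_eq_sum_card_fiberwise fun x hx => sub_mem_filter_dvd_of_mem_quadruples ha hb hx,
    ← add_sum_erase _ _ h0]
  gcongr ?_ + ?_
  · exact card_filter_quadruples_sub_eq_zero_le ha hb
  · have hfiber (d : ℤ) :
        #{x ∈ quadruples q U Y | x.1 * x.2.2.2 - x.2.2.1 * x.2.1 = d} ≤ #(prodLeTuples (a * b)) :=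
      calc _ ≤ _ := card_filter_quadruples_sub_eq_le ha hb d
        _ ≤ #{z ∈ intRect a b ×ˢ intRect a b | z.1.1 * z.1.2 = z.2.1 * z.2.2} :=
          card_filter_sub_eq_le_card_filter_eq (intRect a b) (fun p => p.1 * p.2) d
        _ ≤ _ := card_filter_mul_eq_mul_le a b
    calc _ ≤ ∑ d ∈ D.erase 0, #(prodLeTuples (a * b)) := sum_le_sum fun d _ => hfiber d
      _ ≤ _ := by
          rw [sum_const, smul_eq_mul]
          gcongr
          exact card_erase_zero_filter_dvd_le _ _

end Quadruples

theorem Real.one_add_log_le_log_two_mul_div {x : ℝ} (hx : 1 ≤ x) :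
    1 + Real.log x ≤ Real.log (2 * x) / Real.log 2 := by
  have hlog2 : 0 < Real.log 2 := Real.log_pos one_lt_two
  have hlog2_le : Real.log 2 ≤ 1 := by
    linarith [Real.log_le_sub_one_of_pos (zero_lt_two (α := ℝ))]
  rw [le_div_iff₀ hlog2, Real.log_mul two_ne_zero (by positivity)]
  nlinarith [Real.log_nonneg hx]

theorem Real.natCast_mul_one_add_log_pow_le {n : ℕ} {x : ℝ} (hn : 1 ≤ n) (hnx : (n : ℝ) ≤ x)
    (k : ℕ) : n * (1 + Real.log n) ^ k ≤ x * (Real.log (2 * x) / Real.log 2) ^ k := by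
  have hn' : (1 : ℝ) ≤ n := by exact_mod_cast hn
  have hlog : 1 + Real.log n ≤ Real.log (2 * x) / Real.log 2 :=
    (add_le_add_right (Real.log_le_log (by linarith) hnx) 1).trans
      (Real.one_add_log_le_log_two_mul_div (hn'.trans hnx))
  exact mul_le_mul hnx (pow_le_pow_left₀ (by linarith [Real.log_nonneg hn']) hlog k)
    (by positivity) (by linarith)

/-- **The trivial quadruple count.** There is an absolute constant `C` such that for every
`q ≥ 1` and all `U, Y ≥ 1` the number of such quadruples is at most
`C (1 + (UY/q)(log 2UY)³) UY`. -/
theorem quadruple_count :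
    ∃ C : ℝ, ∀ (q : ℕ), 1 ≤ q → ∀ (U Y : ℝ), 1 ≤ U → 1 ≤ Y →
      ((quadruples q U Y).card : ℝ)
        ≤ C * (1 + U * Y / (q : ℝ) * Real.log (2 * U * Y) ^ (3 : ℕ)) * (U * Y) := by
  refine ⟨1 + 2 / Real.log 2 ^ 3, fun q _ U Y hU hY => ?_⟩
  set N := ⌊U⌋₊ * ⌊Y⌋₊
  have hcount := card_quadruples_le (q := q) (Int.natCast_floor_eq_floor (by linarith : 0 ≤ U)).symm
    (Int.natCast_floor_eq_floor (by linarith : 0 ≤ Y)).symm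
  have hN : (N : ℝ) ≤ U * Y := by
    push_cast [N]
    exact mul_le_mul (Nat.floor_le (by linarith)) (Nat.floor_le (by linarith)) (by positivity)
      (by linarith)
  have hN1 : 1 ≤ N :=
    Nat.mul_le_mul (Nat.one_le_floor_iff U |>.2 hU) (Nat.one_le_floor_iff Y |>.2 hY)
  have htuples : (#(prodLeTuples N) : ℝ) ≤ U * Y * (Real.log (2 * (U * Y)) / Real.log 2) ^ 3 :=
    (card_prodLeTuples_le N).trans (Real.natCast_mul_one_add_log_pow_le hN1 hN 3)
  have hdiv : ((N / q : ℕ) : ℝ) ≤ U * Y / q := Nat.cast_div_le.trans (by gcongr)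
  have hc : 0 ≤ 2 / Real.log 2 ^ 3 := by positivity
  have hX : 0 ≤ U * Y / q * Real.log (2 * U * Y) ^ 3 := by
    have : 0 ≤ Real.log (2 * U * Y) := Real.log_nonneg (by nlinarith)
    positivity
  calc (#(quadruples q U Y) : ℝ) ≤ N + 2 * ((N / q : ℕ) : ℝ) * #(prodLeTuples N) := by
        exact_mod_cast hcount
    _ ≤ U * Y + 2 * (U * Y / q) * (U * Y * (Real.log (2 * (U * Y)) / Real.log 2) ^ 3) := by
        gcongr
    _ = U * Y + 2 / Real.log 2 ^ 3 * (U * Y / q * Real.log (2 * U * Y) ^ 3) * (U * Y) := by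
        rw [mul_assoc 2 U Y]; ring
    _ ≤ _ := by nlinarith [mul_nonneg hX (by positivity : (0 : ℝ) ≤ U * Y),
          mul_nonneg hc (by positivity : (0 : ℝ) ≤ U * Y)]
end

section
/- Let B : ℝ → ℝ be a twice continuously differentiable function supported in the interval [1,2]. There is a constant C, depending only on the suprema of |B|, |B'| and |B''|, such that for every real w ≥ 1 and every integer k ≥ 0, the Fourier coefficient b_k(w) = (1/π)·∫₀^π B(w·sin α)·cos(2kα) dα satisfies |b_k(w)| ≤ C·w/(k + w)². -/
/-!
`B (w sin α)` vanishes unless `sin α ≤ 2 / w`, which by Jordan's inequality confines `α` to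
two intervals of length `O(1 / w)` at `0` and `π`. This alone gives `|b_k(w)| = O(1 / w)`, the
claim for `k ≤ w`. For `k ≥ w` integrate by parts twice against `cos (2kα)`; the boundary terms
vanish, and the second derivative of `α ↦ B (w sin α)` is `O(w²)` and supported on the same
short intervals, so `|b_k(w)| = O(w / k²)`.
-/

open Real Set Function intervalIntegral MeasureTheory

lemma two_div_pi_mul_le_sin {a x : ℝ} (ha : 0 ≤ a) (hx : x ∈ Icc a (π - a)) :
    2 / π * a ≤ sin x := by
  have key : ∀ y, a ≤ y → y ≤ π / 2 → 2 / π * a ≤ sin y := fun y hay hy =>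
    (mul_le_mul_of_nonneg_left hay (by positivity)).trans (mul_le_sin (ha.trans hay) hy)
  rcases le_total x (π / 2) with h | h
  · exact key x hx.1 h
  · simpa only [sin_pi_sub] using key (π - x) (by linarith [hx.2]) (by linarith)

/-- For `w ≥ 2b` the integrand vanishes on `[a, π - a]` with `a = π b / w`, since there
`w sin α ≥ 2b > b`; only the two end intervals of length `a` remain. -/
lemma integral_abs_comp_mul_sin_le {g : ℝ → ℝ} (hg : Continuous g) {b M w : ℝ} (hb : 0 < b)
    (hw : 0 < w) (hsupp : support g ⊆ Iic b) (hM : ∀ x, |g x| ≤ M) :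
    ∫ α in 0..π, |g (w * sin α)| ≤ 2 * π * b * M / w := by
  set F := fun α => |g (w * sin α)|
  have hF : Continuous F := (hg.comp (continuous_const.mul continuous_sin)).abs
  have hM₀ : 0 ≤ M := (abs_nonneg _).trans (hM 0)
  have hFM : ∀ {s t}, s ≤ t → ∫ α in s..t, F α ≤ M * (t - s) := fun hst =>
    (le_abs_self _).trans <| (norm_integral_le_of_norm_le_const (f := F) fun α _ => by
      simpa [F] using hM _).trans_eq (by rw [abs_of_nonneg (sub_nonneg.2 hst)])
  rcases lt_or_ge w (2 * b) with hwb | hwb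
  · calc ∫ α in 0..π, F α ≤ M * (π - 0) := hFM pi_pos.le
      _ ≤ 2 * π * b * M / w := by
        rw [le_div_iff₀ hw]; nlinarith [mul_nonneg pi_pos.le hM₀]
  set a := π * b / w
  have ha : 0 ≤ a := by positivity
  have ha₂ : a ≤ π / 2 := by
    rw [div_le_div_iff₀ hw two_pos]; nlinarith [pi_pos]
  have hmid : ∫ α in a..π - a, F α = 0 := by
    refine integral_zero_ae (ae_of_all _ fun α hα => ?_)
    rw [uIoc_of_le (by linarith)] at hα
    have hsin := two_div_pi_mul_le_sin ha (Ioc_subset_Icc_self hα)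
    have : b < w * sin α := by
      have : 2 / π * a * w = 2 * b := by simp only [a]; field_simp
      nlinarith
    simp [F, notMem_support.1 fun h => (hsupp h).not_gt this]
  have hint : ∀ s t, IntervalIntegrable F volume s t := fun _ _ => hF.intervalIntegrable _ _
  calc ∫ α in 0..π, F α
      = (∫ α in 0..a, F α) + (∫ α in a..π - a, F α) + ∫ α in π - a..π, F α := by
        rw [integral_add_adjacent_intervals (hint _ _) (hint _ _),
          integral_add_adjacent_intervals (hint _ _) (hint _ _)]
    _ ≤ M * (a - 0) + 0 + M * (π - (π - a)) :=
        add_le_add (add_le_add (hFM ha) hmid.le) (hFM (by linarith))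
    _ = 2 * π * b * M / w := by simp only [a]; ring

lemma abs_integral_mul_cos_le {h : ℝ → ℝ} {a b c : ℝ} (hab : a ≤ b)
    (hh : IntervalIntegrable h volume a b) :
    |∫ x in a..b, h x * cos (c * x)| ≤ ∫ x in a..b, |h x| :=
  norm_integral_le_of_norm_le (f := fun x => h x * cos (c * x)) hab
    (ae_of_all _ fun x _ => by
      simpa [abs_mul] using mul_le_of_le_one_right (abs_nonneg (h x)) (abs_cos_le_one (c * x)))
    hh.abs

lemma integral_mul_cos_eq_of_hasDerivAt {f f' f'' : ℝ → ℝ} {a b c : ℝ} (hc : c ≠ 0)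
    (hf : ∀ x ∈ uIcc a b, HasDerivAt f (f' x) x)
    (hf' : ∀ x ∈ uIcc a b, HasDerivAt f' (f'' x) x)
    (hf'' : IntervalIntegrable f'' volume a b) (ha : f' a = 0) (hb : f' b = 0)
    (hsina : sin (c * a) = 0) (hsinb : sin (c * b) = 0) :
    ∫ x in a..b, f x * cos (c * x) = -(∫ x in a..b, f'' x * cos (c * x)) / c ^ 2 := by
  have hsin : ∀ x, HasDerivAt (fun x => sin (c * x) / c) (cos (c * x)) x := fun x =>
    ((hasDerivAt_id' x).const_mul c).sin.div_const c |>.congr_deriv (by field_simp)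
  have hcos : ∀ x, HasDerivAt (fun x => -cos (c * x) / c) (sin (c * x)) x := fun x =>
    ((hasDerivAt_id' x).const_mul c).cos.neg.div_const c |>.congr_deriv (by field_simp)
  have hf'i : IntervalIntegrable f' volume a b :=
    ContinuousOn.intervalIntegrable fun x hx => (hf' x hx).continuousAt.continuousWithinAt
  rw [integral_mul_deriv_eq_deriv_mul hf (fun x _ => hsin x) hf'i
      ((by fun_prop : Continuous fun x => cos (c * x)).intervalIntegrable _ _)]
  simp only [mul_div_assoc', intervalIntegral.integral_div]
  rw [integral_mul_deriv_eq_deriv_mul hf' (fun x _ => hcos x) hf''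
      ((by fun_prop : Continuous fun x => sin (c * x)).intervalIntegrable _ _)]
  simp [hsina, hsinb, ha, hb, neg_div, intervalIntegral.integral_neg]
  simp only [mul_div_assoc', intervalIntegral.integral_div]
  ring

lemma hasDerivAt_comp_mul_sin {g g' : ℝ → ℝ} (hg : ∀ x, HasDerivAt g (g' x) x) (w α : ℝ) :
    HasDerivAt (fun α => g (w * sin α)) (g' (w * sin α) * (w * cos α)) α :=
  (hg _).comp α ((hasDerivAt_sin α).const_mul w)

lemma hasDerivAt_comp_mul_sin_mul_cos {g₁ g₂ : ℝ → ℝ} (hg : ∀ x, HasDerivAt g₁ (g₂ x) x)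
    (w α : ℝ) :
    HasDerivAt (fun α => g₁ (w * sin α) * (w * cos α))
      (g₂ (w * sin α) * (w * cos α) ^ 2 - w * sin α * g₁ (w * sin α)) α :=
  ((hasDerivAt_comp_mul_sin hg w α).mul ((hasDerivAt_cos α).const_mul w)).congr_deriv (by ring)

lemma abs_mul_sq_sub_le {w s c y₁ y₂ : ℝ} (hw : 0 ≤ w) (hs : |s| ≤ 1) (hc : |c| ≤ 1) :
    |y₂ * (w * c) ^ 2 - w * s * y₁| ≤ w ^ 2 * |y₂| + w * |y₁| := by
  have hwc : (w * c) ^ 2 ≤ w ^ 2 := by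
    rw [mul_pow]
    exact mul_le_of_le_one_right (sq_nonneg w) ((sq_le_one_iff_abs_le_one c).mpr hc)
  calc |y₂ * (w * c) ^ 2 - w * s * y₁| ≤ |y₂ * (w * c) ^ 2| + |w * s * y₁| := abs_sub _ _
    _ = |y₂| * (w * c) ^ 2 + w * |y₁| * |s| := by
        rw [abs_mul, abs_of_nonneg (sq_nonneg (w * c)), abs_mul, abs_mul, abs_of_nonneg hw]
        ring
    _ ≤ |y₂| * w ^ 2 + w * |y₁| * 1 := by gcongr
    _ = w ^ 2 * |y₂| + w * |y₁| := by ring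

lemma integral_abs_mul_sq_sub_le {g₁ g₂ : ℝ → ℝ} (hg₁ : Continuous g₁) (hg₂ : Continuous g₂)
    {b M₁ M₂ w : ℝ} (hb : 0 < b) (hw : 0 < w) (hsupp₁ : support g₁ ⊆ Iic b)
    (hsupp₂ : support g₂ ⊆ Iic b) (hM₁ : ∀ x, |g₁ x| ≤ M₁) (hM₂ : ∀ x, |g₂ x| ≤ M₂) :
    ∫ α in 0..π, |g₂ (w * sin α) * (w * cos α) ^ 2 - w * sin α * g₁ (w * sin α)|
      ≤ 2 * π * b * (w * M₂ + M₁) := by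
  have hint : ∀ {h : ℝ → ℝ}, Continuous h →
      IntervalIntegrable (fun α => |h (w * sin α)|) volume 0 π :=
    fun hh => (hh.comp (by fun_prop : Continuous fun α => w * sin α)).abs.intervalIntegrable _ _
  calc _ ≤ ∫ α in 0..π, (w ^ 2 * |g₂ (w * sin α)| + w * |g₁ (w * sin α)|) :=
        integral_mono_on pi_pos.le ((by fun_prop : Continuous _).abs.intervalIntegrable _ _)
          (((hint hg₂).const_mul _).add ((hint hg₁).const_mul _))
          fun α _ => abs_mul_sq_sub_le hw.le (abs_sin_le_one α) (abs_cos_le_one α)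
    _ = w ^ 2 * (∫ α in 0..π, |g₂ (w * sin α)|) + w * ∫ α in 0..π, |g₁ (w * sin α)| := by
        rw [integral_add ((hint hg₂).const_mul _) ((hint hg₁).const_mul _),
          intervalIntegral.integral_const_mul, intervalIntegral.integral_const_mul]
    _ ≤ w ^ 2 * (2 * π * b * M₂ / w) + w * (2 * π * b * M₁ / w) := by
        gcongr
        · exact integral_abs_comp_mul_sin_le hg₂ hb hw hsupp₂ hM₂
        · exact integral_abs_comp_mul_sin_le hg₁ hb hw hsupp₁ hM₁
    _ = 2 * π * b * (w * M₂ + M₁) := by field_simp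

/-- The coefficient `b_k(w)` of the statement, for a general profile `g` in place of `B`. -/
noncomputable def cosCoeff (g : ℝ → ℝ) (w : ℝ) (k : ℕ) : ℝ :=
  1 / π * ∫ α in 0..π, g (w * sin α) * cos (2 * k * α)

lemma abs_cosCoeff_le {g : ℝ → ℝ} (hg : Continuous g) {b M w : ℝ} (hb : 0 < b) (hw : 0 < w)
    (hsupp : support g ⊆ Iic b) (hM : ∀ x, |g x| ≤ M) (k : ℕ) :
    |cosCoeff g w k| ≤ 2 * b * M / w := by
  have hI := (abs_integral_mul_cos_le (c := 2 * k) pi_pos.le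
    ((by fun_prop : Continuous fun α => g (w * sin α)).intervalIntegrable _ _)).trans
    (integral_abs_comp_mul_sin_le hg hb hw hsupp hM)
  rw [cosCoeff, abs_mul, abs_of_pos (by positivity : 0 < 1 / π)]
  calc _ ≤ 1 / π * (2 * π * b * M / w) := by gcongr
    _ = 2 * b * M / w := by field_simp

lemma abs_cosCoeff_le_of_contDiff {g : ℝ → ℝ} (hg : ContDiff ℝ 2 g) {b M₁ M₂ w : ℝ}
    (hb : 0 < b) (hw : 0 < w) (hsupp : support g ⊆ Iic b) (hg₀ : deriv g 0 = 0)
    (hM₁ : ∀ x, |deriv g x| ≤ M₁) (hM₂ : ∀ x, |deriv (deriv g) x| ≤ M₂) {k : ℕ} (hk : k ≠ 0) :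
    |cosCoeff g w k| ≤ b * (w * M₂ + M₁) / (2 * k ^ 2) := by
  obtain ⟨hd, -, hg'⟩ := (contDiff_succ_iff_deriv (n := 1)).mp hg
  have hc₁ : Continuous (deriv g) := hg'.continuous
  have hc₂ : Continuous (deriv (deriv g)) := hg'.continuous_deriv le_rfl
  have hsupp₁ : support (deriv g) ⊆ Iic b :=
    support_deriv_subset.trans (closure_minimal hsupp isClosed_Iic)
  have hsupp₂ : support (deriv (deriv g)) ⊆ Iic b :=
    support_deriv_subset.trans (closure_minimal hsupp₁ isClosed_Iic)
  have hJ := (abs_integral_mul_cos_le (c := 2 * k) pi_pos.le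
    ((by fun_prop : Continuous _).intervalIntegrable _ _)).trans
    (integral_abs_mul_sq_sub_le hc₁ hc₂ hb hw hsupp₁ hsupp₂ hM₁ hM₂)
  rw [cosCoeff, integral_mul_cos_eq_of_hasDerivAt (by positivity)
    (fun α _ => hasDerivAt_comp_mul_sin (fun x => (hd x).hasDerivAt) w α)
    (fun α _ => hasDerivAt_comp_mul_sin_mul_cos
      (fun x => (hg'.differentiable one_ne_zero x).hasDerivAt) w α)
    ((by fun_prop : Continuous _).intervalIntegrable _ _) (by simp [hg₀]) (by simp [hg₀])
    (by simp) (by exact_mod_cast sin_nat_mul_pi (2 * k)), abs_mul,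
    abs_of_pos (by positivity : 0 < 1 / π), abs_div, abs_neg,
    abs_of_pos (by positivity : (0 : ℝ) < (2 * k) ^ 2)]
  calc _ ≤ 1 / π * (2 * π * b * (w * M₂ + M₁) / (2 * k) ^ 2) := by gcongr
    _ = b * (w * M₂ + M₁) / (2 * k ^ 2) := by field_simp

lemma le_four_mul_div_add_sq {x A w k : ℝ} (hA : 0 ≤ A) (hw : 0 < w) (hk : 0 ≤ k)
    (h₁ : k ≤ w → x ≤ A / w) (h₂ : w ≤ k → x ≤ A * w / k ^ 2) :
    x ≤ 4 * A * w / (k + w) ^ 2 := by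
  rcases le_total k w with hkw | hwk
  · refine (h₁ hkw).trans ?_
    rw [div_le_div_iff₀ hw (by positivity)]
    nlinarith [mul_le_mul_of_nonneg_left (by nlinarith : (k + w) ^ 2 ≤ 4 * w ^ 2) hA]
  · refine (h₂ hwk).trans ?_
    rw [div_le_div_iff₀ (by nlinarith) (by positivity)]
    nlinarith [mul_le_mul_of_nonneg_left (by nlinarith : (k + w) ^ 2 ≤ 4 * k ^ 2)
      (mul_nonneg hA hw.le)]

/-- **The Fourier coefficient bound (Section 5).** If `B` is a `C²` function supported in
`[1,2]` then its cosine Fourier coefficients `b_k(w) = π⁻¹ ∫₀^π B(w sin α) cos(2kα) dα`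
satisfy `|b_k(w)| ≤ C w (k + w)⁻²` for all `w ≥ 1` and `k ≥ 0`, where `C` depends only on
the suprema of `|B|`, `|B'|`, `|B''|`. -/
theorem fourier_coefficient_bound (B : ℝ → ℝ) (hB : ContDiff ℝ 2 B)
    (hsupp : Function.support B ⊆ Set.Icc 1 2) :
    ∃ C : ℝ, ∀ w : ℝ, 1 ≤ w → ∀ k : ℕ,
      |(1 / Real.pi) * ∫ α in (0 : ℝ)..Real.pi, B (w * Real.sin α) * Real.cos (2 * k * α)|
        ≤ C * w / ((k : ℝ) + w) ^ 2 := by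
  have hB' : ContDiff ℝ 1 (deriv B) := ((contDiff_succ_iff_deriv (n := 1)).mp hB).2.2
  have hcpt : HasCompactSupport B := .of_support_subset_isCompact isCompact_Icc hsupp
  obtain ⟨M₀, hM₀⟩ := hB.continuous.bounded_above_of_compact_support hcpt
  obtain ⟨M₁, hM₁⟩ := hB'.continuous.bounded_above_of_compact_support hcpt.deriv
  obtain ⟨M₂, hM₂⟩ := (hB'.continuous_deriv le_rfl).bounded_above_of_compact_support
    hcpt.deriv.deriv
  have hB₀ : deriv B 0 = 0 := notMem_support.mp fun h =>
    absurd (support_deriv_subset.trans (closure_minimal hsupp isClosed_Icc) h).1 (by norm_num)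
  have hsupp₂ : support B ⊆ Iic 2 := hsupp.trans Icc_subset_Iic_self
  have hM₀₀ : 0 ≤ M₀ := (norm_nonneg _).trans (hM₀ 0)
  have hM₁₀ : 0 ≤ M₁ := (norm_nonneg _).trans (hM₁ 0)
  have hM₂₀ : 0 ≤ M₂ := (norm_nonneg _).trans (hM₂ 0)
  refine ⟨4 * (4 * (M₀ + M₁ + M₂)), fun w hw k => ?_⟩
  have hw₀ : 0 < w := by linarith
  refine le_four_mul_div_add_sq (by positivity) hw₀ k.cast_nonneg (fun _ => ?_) (fun hwk => ?_)
  · refine (abs_cosCoeff_le hB.continuous two_pos hw₀ hsupp₂ hM₀ k).trans ?_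
    rw [div_le_div_iff_of_pos_right hw₀]
    linarith
  · have hk : k ≠ 0 := by rintro rfl; simp at hwk; linarith
    refine (abs_cosCoeff_le_of_contDiff hB two_pos hw₀ hsupp₂ hB₀ hM₁ hM₂ hk).trans ?_
    rw [mul_div_mul_left _ _ two_ne_zero]
    gcongr
    nlinarith
end
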